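/- arXiv:2512.10013 — 11 statements merged into one kernel-verified Lean document; each statement's English description precedes it below -/
import Mathlib

section
/- For x ≠ 0, the subdifferential of the gauge function satisfies ∂γ_K(x) = N(K, x/γ_K(x)) ∩ ∂K°, where N(K, z) is the normal cone of K at z and ∂K° is the boundary of the polar set. -/
open RealInnerProductSpace

/-- The polar set of `K`. -/
def polarSet {n : ℕ} (K : Set (EuclideanSpace ℝ (Fin n))) : Set (EuclideanSpace ℝ (Fin n)) :=
  {x | ∀ y ∈ K, ⟪x, y⟫ ≤ 1}

/-- The subdifferential of a function `γ : ℝⁿ → ℝ` at `x`. -/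
def subdiff {n : ℕ} (γ : EuclideanSpace ℝ (Fin n) → ℝ) (x : EuclideanSpace ℝ (Fin n)) :
    Set (EuclideanSpace ℝ (Fin n)) :=
  {v | ∀ y, γ x + ⟪y - x, v⟫ ≤ γ y}

/-- The normal cone of `K` at `z`. -/
def normalCone {n : ℕ} (K : Set (EuclideanSpace ℝ (Fin n))) (z : EuclideanSpace ℝ (Fin n)) :
    Set (EuclideanSpace ℝ (Fin n)) :=
  {v | ∀ y ∈ K, ⟪y - z, v⟫ ≤ 0}

lemma polarSet_isClosed {n : ℕ} (K : Set (EuclideanSpace ℝ (Fin n))) :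
    IsClosed (polarSet K) := by
  have : polarSet K = ⋂ y ∈ K, {v : EuclideanSpace ℝ (Fin n) | ⟪v, y⟫ ≤ 1} := by
    ext v; simp [polarSet]
  rw [this]
  exact isClosed_biInter fun y _ =>
    isClosed_le (Continuous.inner continuous_id continuous_const) continuous_const

/-- Characterization of the frontier of the polar set. -/
lemma mem_frontier_polar_iff {n : ℕ} (K : Set (EuclideanSpace ℝ (Fin n)))
    (hKc : IsCompact K) (h0K : (0 : EuclideanSpace ℝ (Fin n)) ∈ K)
    (v : EuclideanSpace ℝ (Fin n)) :
    v ∈ frontier (polarSet K) ↔ v ∈ polarSet K ∧ ∃ y ∈ K, ⟪v, y⟫ = 1 := by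
  have hcl : IsClosed (polarSet K) := polarSet_isClosed K
  constructor
  · rintro ⟨hv, hnotint⟩
    rw [hcl.closure_eq] at hv
    refine ⟨hv, ?_⟩
    by_contra h
    push_neg at h
    -- then sup over K is < 1, so v is in the interior
    apply hnotint
    have hne : K.Nonempty := ⟨0, h0K⟩
    have hcont : Continuous (fun y : EuclideanSpace ℝ (Fin n) => ⟪v, y⟫) :=
      Continuous.inner continuous_const continuous_id
    obtain ⟨y₀, hy₀K, hy₀max⟩ := hKc.exists_isMaxOn hne hcont.continuousOn
    set m : ℝ := ⟪v, y₀⟫ with hm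
    have hmlt : m < 1 := lt_of_le_of_ne (hv y₀ hy₀K) (h y₀ hy₀K)
    obtain ⟨R, hRpos, hR⟩ : ∃ R : ℝ, 0 < R ∧ ∀ y ∈ K, ‖y‖ ≤ R := by
      obtain ⟨R0, hR0⟩ := hKc.isBounded.exists_norm_le
      exact ⟨max R0 1, lt_of_lt_of_le one_pos (le_max_right _ _),
        fun y hy => (hR0 y hy).trans (le_max_left _ _)⟩
    have : Metric.ball v ((1 - m) / R) ⊆ polarSet K := by
      intro w hw y hy
      have h1 : ⟪w, y⟫ = ⟪v, y⟫ + ⟪w - v, y⟫ := by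
        rw [← inner_add_left]; congr 1; abel
      have h2 : ⟪w - v, y⟫ ≤ ‖w - v‖ * ‖y‖ := real_inner_le_norm _ _
      have hwv : ‖w - v‖ < (1 - m) / R := by simpa [dist_eq_norm] using hw
      have h3 : ‖w - v‖ * ‖y‖ < (1 - m) / R * R :=
        calc ‖w - v‖ * ‖y‖ ≤ ‖w - v‖ * R :=
              mul_le_mul_of_nonneg_left (hR y hy) (norm_nonneg _)
          _ < (1 - m) / R * R := mul_lt_mul_of_pos_right hwv hRpos
      rw [div_mul_cancel₀ _ (ne_of_gt hRpos)] at h3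
      have h4 : ⟪v, y⟫ ≤ m := hy₀max hy
      calc ⟪w, y⟫ = ⟪v, y⟫ + ⟪w - v, y⟫ := h1
        _ ≤ m + (1 - m) := by
            apply add_le_add h4 (h2.trans (le_of_lt h3))
        _ = 1 := by ring
    exact mem_interior.2 ⟨Metric.ball v ((1 - m) / R), this, Metric.isOpen_ball,
      Metric.mem_ball_self (div_pos (by linarith) hRpos)⟩
  · rintro ⟨hv, y₀, hy₀K, hy₀⟩
    constructor
    · rw [hcl.closure_eq]; exact hv
    · intro hint
      obtain ⟨ε, hε, hball⟩ := Metric.isOpen_iff.1 isOpen_interior v hint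
      have hv0 : v ≠ 0 := by
        intro h; rw [h] at hy₀; simp at hy₀
      set t : ℝ := 1 + ε / (2 * ‖v‖) with ht
      have hvnorm : 0 < ‖v‖ := norm_pos_iff.2 hv0
      have hepos : 0 < ε / (2 * ‖v‖) := by positivity
      have ht1 : 1 < t := by rw [ht]; linarith
      have hmem : t • v ∈ Metric.ball v ε := by
        rw [Metric.mem_ball, dist_eq_norm]
        have h5 : t • v - v = (t - 1) • v := by rw [sub_smul, one_smul]
        rw [h5, norm_smul, Real.norm_eq_abs, abs_of_pos (by linarith)]
        have h6 : t - 1 = ε / (2 * ‖v‖) := by rw [ht]; ring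
        have h7 : (t - 1) * ‖v‖ = ε / 2 := by
          rw [h6]; field_simp
        rw [h7]; linarith
      have : t • v ∈ polarSet K := interior_subset (hball hmem)
      have h8 := this y₀ hy₀K
      rw [real_inner_smul_left, hy₀, mul_one] at h8
      linarith

/-- For `x ≠ 0`, the subdifferential of the gauge satisfies
`∂γ_K(x) = N(K, x/γ_K(x)) ∩ ∂K°`. -/
theorem subdiff_gauge_eq {n : ℕ} (K : Set (EuclideanSpace ℝ (Fin n)))
    (hKc : IsCompact K) (hKconv : Convex ℝ K) (h0 : (0 : EuclideanSpace ℝ (Fin n)) ∈ interior K)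
    (x : EuclideanSpace ℝ (Fin n)) (hx : x ≠ 0) :
    subdiff (gauge K) x = normalCone K ((gauge K x)⁻¹ • x) ∩ frontier (polarSet K) := by
  have h0K : (0 : EuclideanSpace ℝ (Fin n)) ∈ K := interior_subset h0
  have hnhds : K ∈ nhds (0 : EuclideanSpace ℝ (Fin n)) := mem_interior_iff_mem_nhds.1 h0
  have habs : Absorbent ℝ K := absorbent_nhds_zero hnhds
  have hbd : Bornology.IsVonNBounded ℝ K := NormedSpace.isVonNBounded_of_isBounded _ hKc.isBounded
  have hmemK : ∀ y, gauge K y ≤ 1 → y ∈ K := fun y hy => by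
    rw [← hKc.isClosed.closure_eq]
    exact (gauge_le_one_iff_mem_closure hKconv hnhds).1 hy
  have hgK : ∀ y ∈ K, gauge K y ≤ 1 := fun y hy => gauge_le_one_of_mem hy
  have hγpos : 0 < gauge K x := (gauge_pos habs hbd).2 hx
  set γx := gauge K x with hγx
  set z := γx⁻¹ • x with hz
  have hγz : gauge K z = 1 := by
    rw [hz, gauge_smul_of_nonneg (le_of_lt (inv_pos.2 hγpos)), smul_eq_mul,
      inv_mul_cancel₀ (ne_of_gt hγpos)]
  have hzK : z ∈ K := hmemK z (le_of_eq hγz)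
  -- key: ⟪y, v⟫ ≤ gauge K y for all y iff v ∈ polarSet K
  have hpolar_le : ∀ v ∈ polarSet K, ∀ y, ⟪y, v⟫ ≤ gauge K y := by
    intro v hv y
    rcases eq_or_ne y 0 with rfl | hy0
    · simp [gauge_zero]
    · have hγy : 0 < gauge K y := (gauge_pos habs hbd).2 hy0
      have hyK : (gauge K y)⁻¹ • y ∈ K := by
        apply hmemK
        rw [gauge_smul_of_nonneg (le_of_lt (inv_pos.2 hγy)), smul_eq_mul,
          inv_mul_cancel₀ (ne_of_gt hγy)]
      have h9 := hv _ hyK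
      rw [real_inner_comm, real_inner_smul_left] at h9
      rw [inv_mul_le_iff₀ hγy, mul_one] at h9
      exact h9
  ext v
  simp only [subdiff, normalCone, Set.mem_setOf_eq, Set.mem_inter_iff]
  rw [mem_frontier_polar_iff K hKc h0K]
  constructor
  · intro hsub
    -- derive ⟪x, v⟫ = γx
    have h1 : γx + ⟪(0 : EuclideanSpace ℝ (Fin n)) - x, v⟫ ≤ gauge K 0 := hsub 0
    rw [gauge_zero, zero_sub, inner_neg_left] at h1
    have hxv_ge : γx ≤ ⟪x, v⟫ := by linarith
    have h2 : γx + ⟪(2 : ℝ) • x - x, v⟫ ≤ gauge K ((2 : ℝ) • x) := hsub ((2 : ℝ) • x)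
    rw [gauge_smul_of_nonneg (by norm_num : (0:ℝ) ≤ 2), smul_eq_mul] at h2
    have h2x : (2 : ℝ) • x - x = x := by
      rw [two_smul]; abel
    rw [h2x] at h2
    have hxv_le : ⟪x, v⟫ ≤ γx := by linarith
    have hxv : ⟪x, v⟫ = γx := le_antisymm hxv_le hxv_ge
    -- ⟪y, v⟫ ≤ gauge K y for all y
    have hyv : ∀ y, ⟪y, v⟫ ≤ gauge K y := by
      intro y
      have := hsub y
      rw [inner_sub_left, hxv] at this
      linarith
    have hzv : ⟪z, v⟫ = 1 := by
      rw [hz, real_inner_smul_left, hxv, inv_mul_cancel₀ (ne_of_gt hγpos)]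
    have hvpolar : v ∈ polarSet K := by
      intro y hy
      rw [real_inner_comm]
      exact (hyv y).trans (hgK y hy)
    refine ⟨fun y hy => ?_, hvpolar, z, hzK, by rw [real_inner_comm]; exact hzv⟩
    rw [inner_sub_left, hzv]
    have := (hyv y).trans (hgK y hy)
    linarith
  · rintro ⟨hnc, hvpolar, y₀, hy₀K, hy₀⟩
    -- ⟪z, v⟫ = 1
    have hzv_le : ⟪z, v⟫ ≤ 1 := by
      rw [real_inner_comm]; exact hvpolar z hzK
    have hzv_ge : 1 ≤ ⟪z, v⟫ := by
      have := hnc y₀ hy₀K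
      rw [inner_sub_left] at this
      rw [real_inner_comm] at hy₀
      linarith
    have hzv : ⟪z, v⟫ = 1 := le_antisymm hzv_le hzv_ge
    have hxv : ⟪x, v⟫ = γx := by
      rw [hz, real_inner_smul_left, inv_mul_eq_one₀ (ne_of_gt hγpos)] at hzv
      exact hzv.symm
    intro y
    have := hpolar_le v hvpolar y
    rw [inner_sub_left, hxv]
    linarith
end

section
/- For x ∈ ∂K and v ∈ ∂K°, the vector v is a subgradient of γ_K at x if and only if x is a subgradient of γ_{K°} at v. -/
open RealInnerProductSpace

lemma polarSet_convex {n : ℕ} (K : Set (EuclideanSpace ℝ (Fin n))) :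
    Convex ℝ (polarSet K) := by
  intro a ha b hb s t hs ht hst y hy
  have := ha y hy
  have := hb y hy
  rw [inner_add_left, real_inner_smul_left, real_inner_smul_left]
  nlinarith

lemma zero_mem_interior_polarSet {n : ℕ} {K : Set (EuclideanSpace ℝ (Fin n))}
    (hKc : IsCompact K) : (0 : EuclideanSpace ℝ (Fin n)) ∈ interior (polarSet K) := by
  obtain ⟨R, hR0, hR⟩ : ∃ R > 0, K ⊆ Metric.closedBall 0 R := by
    obtain ⟨R, hR⟩ := hKc.isBounded.subset_closedBall 0
    exact ⟨max R 1, lt_of_lt_of_le one_pos (le_max_right _ _),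
      hR.trans (Metric.closedBall_subset_closedBall (le_max_left _ _))⟩
  have : Metric.ball (0 : EuclideanSpace ℝ (Fin n)) R⁻¹ ⊆ polarSet K := by
    intro z hz y hy
    have hz' : ‖z‖ < R⁻¹ := by simpa using hz
    have hy' : ‖y‖ ≤ R := by simpa using hR hy
    have hlt : ⟪z, y⟫ < 1 := calc
      ⟪z, y⟫ ≤ ‖z‖ * ‖y‖ := real_inner_le_norm z y
      _ ≤ ‖z‖ * R := by nlinarith [norm_nonneg z]
      _ < R⁻¹ * R := by nlinarith [norm_nonneg y]
      _ = 1 := inv_mul_cancel₀ hR0.ne'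
    exact hlt.le
  exact mem_interior_iff_mem_nhds.mpr
    (Filter.mem_of_superset (Metric.ball_mem_nhds 0 (inv_pos.mpr hR0)) this)

/-- For `v` in the polar set, `⟪y, v⟫ ≤ gauge K y`. -/
lemma inner_le_gauge {n : ℕ} {K : Set (EuclideanSpace ℝ (Fin n))}
    (hK : Absorbent ℝ K) {v : EuclideanSpace ℝ (Fin n)} (hv : v ∈ polarSet K)
    (y : EuclideanSpace ℝ (Fin n)) : ⟪y, v⟫ ≤ gauge K y := by
  rw [gauge]
  refine le_csInf hK.gauge_set_nonempty ?_
  rintro r ⟨hr, w, hw, rfl⟩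
  have := hv w hw
  rw [real_inner_smul_left, real_inner_comm]
  nlinarith

/-- For `x ∈ ∂K` and `v ∈ ∂K°`, the vector `v` is a subgradient of `γ_K` at `x` if and only if
`x` is a subgradient of `γ_{K°}` at `v`. -/
theorem subgradient_gauge_symm {n : ℕ} (K : Set (EuclideanSpace ℝ (Fin n)))
    (hKc : IsCompact K) (hKconv : Convex ℝ K) (h0 : (0 : EuclideanSpace ℝ (Fin n)) ∈ interior K)
    (x v : EuclideanSpace ℝ (Fin n)) (hx : x ∈ frontier K) (hv : v ∈ frontier (polarSet K)) :
    v ∈ subdiff (gauge K) x ↔ x ∈ subdiff (gauge (polarSet K)) v := by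
  have hK0 : K ∈ nhds (0 : EuclideanSpace ℝ (Fin n)) := mem_interior_iff_mem_nhds.mp h0
  have hP0 : polarSet K ∈ nhds (0 : EuclideanSpace ℝ (Fin n)) :=
    mem_interior_iff_mem_nhds.mp (zero_mem_interior_polarSet hKc)
  have hKabs : Absorbent ℝ K := absorbent_nhds_zero hK0
  have hPabs : Absorbent ℝ (polarSet K) := absorbent_nhds_zero hP0
  have hgx : gauge K x = 1 := (gauge_eq_one_iff_mem_frontier hKconv hK0).mpr hx
  have hgv : gauge (polarSet K) v = 1 :=
    (gauge_eq_one_iff_mem_frontier (polarSet_convex K) hP0).mpr hv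
  have hxK : x ∈ K := by
    have := hx.1; rwa [hKc.isClosed.closure_eq] at this
  have hvP : v ∈ polarSet K := by
    have := hv.1; rwa [(polarSet_isClosed K).closure_eq] at this
  have hxPP : x ∈ polarSet (polarSet K) := by
    intro w hw
    rw [real_inner_comm]
    exact hw x hxK
  -- each side is equivalent to ⟪x, v⟫ = 1
  have key : ∀ (S : Set (EuclideanSpace ℝ (Fin n))) (a b : EuclideanSpace ℝ (Fin n)),
      Absorbent ℝ S → gauge S a = 1 → b ∈ polarSet S → ⟪a, b⟫ = 1 →
      b ∈ subdiff (gauge S) a := by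
    intro S a b hSabs hga hbS hab y
    have h1 : ⟪y, b⟫ ≤ gauge S y := inner_le_gauge hSabs hbS y
    have h2 : ⟪y - a, b⟫ = ⟪y, b⟫ - ⟪a, b⟫ := inner_sub_left y a b
    rw [hga]
    linarith
  constructor
  · intro h
    have h0' := h 0
    rw [hgx, gauge_zero] at h0'
    simp only [zero_sub, inner_neg_left] at h0'
    have hle : ⟪x, v⟫ ≤ 1 := by
      have := hvP x hxK
      rwa [real_inner_comm] at this
    have heq : ⟪x, v⟫ = 1 := le_antisymm hle (by linarith)
    exact key (polarSet K) v x hPabs hgv hxPP (by rwa [real_inner_comm])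
  · intro h
    have h0' := h 0
    rw [hgv, gauge_zero] at h0'
    simp only [zero_sub, inner_neg_left] at h0'
    have hle : ⟪v, x⟫ ≤ 1 := hvP x hxK
    have heq : ⟪v, x⟫ = 1 := le_antisymm hle (by linarith)
    exact key K x v hKabs hgx hvP (by rwa [real_inner_comm])
end

section
/- For x ∈ ∂K and v ∈ ∂K°, v belongs to the normal cone N(K, x) if and only if x belongs to the normal cone N(K°, v). -/
open RealInnerProductSpace

lemma aux_lemA {n : ℕ} {K : Set (EuclideanSpace ℝ (Fin n))} (hKc : IsCompact K)
    {v : EuclideanSpace ℝ (Fin n)} {c : ℝ} (hc : c < 1) (h : ∀ y ∈ K, ⟪v, y⟫ ≤ c) :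
    v ∈ interior (polarSet K) := by
  obtain ⟨R, hR0, hRK⟩ := hKc.isBounded.subset_closedBall_lt 0 0
  have hε : 0 < (1 - c) / R := div_pos (by linarith) hR0
  apply mem_interior.mpr
  refine ⟨Metric.ball v ((1 - c) / R), ?_, Metric.isOpen_ball, Metric.mem_ball_self hε⟩
  intro w hw y hy
  have hyR : ‖y‖ ≤ R := by simpa using hRK hy
  have h1 : ⟪w - v, y⟫ ≤ ‖w - v‖ * ‖y‖ := real_inner_le_norm _ _
  have h2 : ‖w - v‖ * ‖y‖ ≤ ((1 - c) / R) * R := by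
    apply mul_le_mul (le_of_lt ?_) hyR (norm_nonneg _) (le_of_lt hε)
    simpa [dist_eq_norm] using hw
  have h3 : ((1 - c) / R) * R = 1 - c := div_mul_cancel₀ _ (ne_of_gt hR0)
  have h4 : ⟪w - v, y⟫ = ⟪w, y⟫ - ⟪v, y⟫ := inner_sub_left _ _ _
  linarith [h y hy, h1.trans (h2.trans_eq h3)]

lemma aux_polar_bounded {n : ℕ} {K : Set (EuclideanSpace ℝ (Fin n))} {r : ℝ} (hr : 0 < r)
    (hball : Metric.ball 0 r ⊆ K) {w : EuclideanSpace ℝ (Fin n)} (hw : w ∈ polarSet K) :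
    ‖w‖ ≤ 2 / r := by
  rcases eq_or_ne w 0 with h0 | h0
  · simp [h0]; positivity
  · have hwn : 0 < ‖w‖ := norm_pos_iff.mpr h0
    have hy : (r / (2 * ‖w‖)) • w ∈ Metric.ball (0 : EuclideanSpace ℝ (Fin n)) r := by
      simp only [Metric.mem_ball, dist_zero_right, norm_smul, Real.norm_eq_abs]
      rw [abs_of_pos (by positivity)]
      have : r / (2 * ‖w‖) * ‖w‖ = r / 2 := by field_simp
      rw [this]; linarith
    have := hw _ (hball hy)
    rw [real_inner_smul_right, real_inner_self_eq_norm_sq] at this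
    have h2 : r / (2 * ‖w‖) * ‖w‖ ^ 2 = r * ‖w‖ / 2 := by
      field_simp
    rw [h2] at this
    rw [le_div_iff₀ hr, mul_comm]
    linarith

lemma aux_lemB {n : ℕ} {K : Set (EuclideanSpace ℝ (Fin n))} (hK : IsClosed K)
    (hconv : Convex ℝ K) (h0 : (0 : EuclideanSpace ℝ (Fin n)) ∈ interior K)
    {x : EuclideanSpace ℝ (Fin n)} {c : ℝ} (hc : c < 1)
    (h : ∀ w ∈ polarSet K, ⟪w, x⟫ ≤ c) : x ∈ interior K := by
  obtain ⟨r, hr, hball⟩ := Metric.isOpen_iff.mp isOpen_interior 0 h0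
  have hball' : Metric.ball (0 : EuclideanSpace ℝ (Fin n)) r ⊆ K :=
    hball.trans interior_subset
  set M : ℝ := 2 / r with hM
  have hM0 : 0 < M := by positivity
  have hε : 0 < (1 - c) / M := div_pos (by linarith) hM0
  apply mem_interior.mpr
  refine ⟨Metric.ball x ((1 - c) / M), ?_, Metric.isOpen_ball, Metric.mem_ball_self hε⟩
  intro z hz
  by_contra hzK
  obtain ⟨f, u, hfa, hfz⟩ := geometric_hahn_banach_closed_point hconv hK hzK
  have h0K : (0 : EuclideanSpace ℝ (Fin n)) ∈ K := interior_subset h0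
  have hu : 0 < u := by have := hfa 0 h0K; simpa using this
  set w : EuclideanSpace ℝ (Fin n) :=
    u⁻¹ • (InnerProductSpace.toDual ℝ (EuclideanSpace ℝ (Fin n))).symm f with hwdef
  have hinner : ∀ a, ⟪w, a⟫ = u⁻¹ * f a := by
    intro a
    rw [hwdef, real_inner_smul_left, InnerProductSpace.toDual_symm_apply]
  have hwK : w ∈ polarSet K := by
    intro a ha
    rw [hinner]
    rw [inv_mul_le_iff₀ hu]
    nlinarith [hfa a ha]
  have hwz : 1 < ⟪w, z⟫ := by
    rw [hinner, show (1:ℝ) = u⁻¹ * u by field_simp]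
    exact mul_lt_mul_of_pos_left hfz (inv_pos.mpr hu)
  have hwM : ‖w‖ ≤ M := aux_polar_bounded hr hball' hwK
  have h1 : ⟪w, z - x⟫ ≤ ‖w‖ * ‖z - x‖ := real_inner_le_norm _ _
  have h2 : ‖w‖ * ‖z - x‖ ≤ M * ((1 - c) / M) :=
    mul_le_mul hwM (by simpa [dist_eq_norm] using hz.le) (norm_nonneg _) hM0.le
  have h3 : M * ((1 - c) / M) = 1 - c := mul_div_cancel₀ _ (ne_of_gt hM0)
  have hsplit : ⟪w, z - x⟫ = ⟪w, z⟫ - ⟪w, x⟫ := inner_sub_right _ _ _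
  linarith [h w hwK, h1.trans (h2.trans_eq h3)]

/-- For `x ∈ ∂K` and `v ∈ ∂K°`, `v ∈ N(K, x)` if and only if `x ∈ N(K°, v)`. -/
theorem normalCone_polar_symm {n : ℕ} (K : Set (EuclideanSpace ℝ (Fin n)))
    (hKc : IsCompact K) (hKconv : Convex ℝ K) (h0 : (0 : EuclideanSpace ℝ (Fin n)) ∈ interior K)
    (x v : EuclideanSpace ℝ (Fin n)) (hx : x ∈ frontier K) (hv : v ∈ frontier (polarSet K)) :
    v ∈ normalCone K x ↔ x ∈ normalCone (polarSet K) v := by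
  have hKclosed : IsClosed K := hKc.isClosed
  have hxK : x ∈ K := hKclosed.frontier_subset hx
  have hpolarClosed : IsClosed (polarSet K) := by
    have : polarSet K = ⋂ y ∈ K, {w : EuclideanSpace ℝ (Fin n) | ⟪w, y⟫ ≤ 1} := by
      ext w; simp [polarSet, Set.mem_iInter]
    rw [this]
    exact isClosed_biInter fun y _ =>
      isClosed_le (Continuous.inner continuous_id continuous_const) continuous_const
  have hvP : v ∈ polarSet K := hpolarClosed.frontier_subset hv
  have hvx1 : ⟪v, x⟫ ≤ 1 := hvP x hxK
  constructor
  · intro hN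
    -- first show ⟪x, v⟫ = 1
    have key : ⟪v, x⟫ = 1 := by
      by_contra hne
      have hlt : ⟪v, x⟫ < 1 := lt_of_le_of_ne hvx1 hne
      have : v ∈ interior (polarSet K) := by
        apply aux_lemA hKc hlt
        intro y hy
        have := hN y hy
        rw [inner_sub_left] at this
        have hsymm : ⟪v, y⟫ = ⟪y, v⟫ := real_inner_comm _ _
        have hsymm2 : ⟪v, x⟫ = ⟪x, v⟫ := real_inner_comm _ _
        linarith
      exact hv.2 this
    intro w hw
    rw [inner_sub_left]
    have h1 : ⟪w, x⟫ ≤ 1 := hw x hxK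
    linarith [real_inner_comm v x ▸ key]
  · intro hN
    have key : ⟪v, x⟫ = 1 := by
      by_contra hne
      have hlt : ⟪v, x⟫ < 1 := lt_of_le_of_ne hvx1 hne
      have : x ∈ interior K := by
        apply aux_lemB hKclosed hKconv h0 hlt
        intro w hw
        have := hN w hw
        rw [inner_sub_left] at this
        have hsymm : ⟪v, x⟫ = ⟪x, v⟫ := real_inner_comm _ _
        linarith [real_inner_comm w x]
      exact hx.2 this
    intro y hy
    rw [inner_sub_left]
    have h1 : ⟪y, v⟫ ≤ 1 := by
      have := hvP y hy
      linarith [real_inner_comm v y]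
    linarith [real_inner_comm x v ▸ key]
end

section
/- If x ∈ ∂K and the normal cone N(K, x) has nonempty interior, then for every v in the interior of N(K, x), the gauge γ_{K°} of the polar set is differentiable at v with Dγ_{K°}(v) = x. -/
open RealInnerProductSpace Pointwise

lemma gauge_polar_eq_inner {n : ℕ} {K : Set (EuclideanSpace ℝ (Fin n))}
    (hKc : IsCompact K) (h0 : (0 : EuclideanSpace ℝ (Fin n)) ∈ interior K)
    {x : EuclideanSpace ℝ (Fin n)} (hxK : x ∈ K)
    {w : EuclideanSpace ℝ (Fin n)} (hw : w ∈ normalCone K x) :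
    gauge (polarSet K) w = ⟪x, w⟫ := by
  obtain ⟨ε, hε, hball⟩ := Metric.mem_nhds_iff.1 (mem_interior_iff_mem_nhds.1 h0)
  rcases eq_or_ne w 0 with rfl | hw0
  · simp [gauge_zero]
  -- inner bound from the normal cone: ∀ y ∈ K, ⟪y, w⟫ ≤ ⟪x, w⟫
  have key : ∀ y ∈ K, ⟪y, w⟫ ≤ ⟪x, w⟫ := by
    intro y hy
    have := hw y hy
    rw [inner_sub_left] at this
    linarith
  set h : ℝ := ⟪x, w⟫ with hh
  have hnw : (0:ℝ) < ‖w‖ := norm_pos_iff.mpr hw0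
  have hc : (0:ℝ) < ε / 2 / ‖w‖ := div_pos (by linarith) hnw
  have hpos : 0 < h := by
    have hyK : (ε / 2 / ‖w‖) • w ∈ K := by
      apply hball
      simp only [Metric.mem_ball, dist_zero_right, norm_smul, Real.norm_eq_abs]
      rw [abs_of_pos hc]
      rw [div_mul_cancel₀ _ (norm_ne_zero_iff.2 hw0)]
      linarith
    have := key _ hyK
    rw [real_inner_smul_left, real_inner_self_eq_norm_sq] at this
    have hq : 0 < (ε / 2 / ‖w‖) * ‖w‖ ^ 2 := by positivity
    linarith
  have hmem : h⁻¹ • w ∈ polarSet K := by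
    intro y hy
    rw [real_inner_smul_left]
    have hy' : ⟪w, y⟫ ≤ h := by
      rw [real_inner_comm]; exact key y hy
    calc h⁻¹ * ⟪w, y⟫ ≤ h⁻¹ * h :=
          mul_le_mul_of_nonneg_left hy' (by positivity)
      _ = 1 := inv_mul_cancel₀ hpos.ne'
  have hwmem : w ∈ h • polarSet K := by
    refine Set.mem_smul_set.2 ⟨h⁻¹ • w, hmem, ?_⟩
    rw [smul_smul, mul_inv_cancel₀ hpos.ne', one_smul]
  apply le_antisymm
  · exact gauge_le_of_mem hpos.le hwmem
  · -- h ≤ gauge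
    rw [gauge]
    refine le_csInf ⟨h, ⟨hpos, hwmem⟩⟩ ?_
    rintro r ⟨hr, z, hz, rfl⟩
    have := hz x hxK
    have : ⟪x, r • z⟫ ≤ r := by
      rw [real_inner_smul_right, real_inner_comm]
      calc r * ⟪z, x⟫ ≤ r * 1 := mul_le_mul_of_nonneg_left (hz x hxK) hr.le
        _ = r := mul_one r
    linarith [this]

/-- If `x ∈ ∂K` and the normal cone `N(K, x)` has nonempty interior, then for every `v` in the
interior of `N(K, x)`, the gauge of the polar set is differentiable at `v` with
`Dγ_{K°}(v) = x`. -/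
theorem gauge_polar_differentiable_on_interior_normalCone {n : ℕ}
    (K : Set (EuclideanSpace ℝ (Fin n)))
    (hKc : IsCompact K) (hKconv : Convex ℝ K) (h0 : (0 : EuclideanSpace ℝ (Fin n)) ∈ interior K)
    (x : EuclideanSpace ℝ (Fin n)) (hx : x ∈ frontier K)
    (hne : (interior (normalCone K x)).Nonempty) :
    ∀ v ∈ interior (normalCone K x), HasGradientAt (gauge (polarSet K)) x v := by
  intro v hv
  have hxK : x ∈ K := by
    have := hx.1; rwa [hKc.isClosed.closure_eq] at this
  have hlin : HasGradientAt (fun w : EuclideanSpace ℝ (Fin n) => ⟪x, w⟫) x v := by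
    rw [hasGradientAt_iff_hasFDerivAt]
    have : (InnerProductSpace.toDual ℝ (EuclideanSpace ℝ (Fin n)) x : EuclideanSpace ℝ (Fin n) →L[ℝ] ℝ) = innerSL ℝ x := by
      ext y; simp [InnerProductSpace.toDual_apply_apply]
    rw [this]
    exact (innerSL ℝ x).hasFDerivAt
  apply hlin.congr_of_eventuallyEq
  filter_upwards [isOpen_interior.mem_nhds hv] with w hw
  exact gauge_polar_eq_inner hKc h0 hxK (interior_subset hw)
end

section
/- Let K be a polytope with 0 in its interior and z ∈ ∂K, and let F be the smallest-dimensional face of K containing z, with normal facets F_i ⊇ F having outer normal vertices v_i ∈ ∂K°. Then N(K, z) ∩ ∂K° equals the convex hull of {v_i : F_i ⊇ F}. -/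
/-!
Since `K` is compact, a point `w ∈ K°` lies on `∂K°` exactly when `⟪w, y⟫ = 1` for some `y ∈ K`;
if moreover `w ∈ N(K, z)`, this forces `⟪z, w⟫ = 1`. By Hahn–Banach, `K°` is the convex hull of
`V ∪ {0}`, and since the functional `⟪z, ·⟫` is `≤ 1` on `V ∪ {0}`, a convex combination on which it
equals `1` only charges the points `v ∈ V` with `⟪z, v⟫ = 1`. Conversely, each such `v` lies in
the convex set `K° ∩ N(K, z) ∩ {⟪z, ·⟫ = 1}`, which is contained in `N(K, z) ∩ ∂K°`.
-/

open RealInnerProductSpace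

theorem Finset.mem_convexHull_filter_of_le_of_eq {𝕜 E : Type*} [Field 𝕜] [LinearOrder 𝕜]
    [IsStrictOrderedRing 𝕜] [AddCommGroup E] [Module 𝕜 E] [DecidableEq 𝕜]
    (f : E →ₗ[𝕜] 𝕜) {s : Finset E} {c : 𝕜} (hs : ∀ v ∈ s, f v ≤ c) {w : E}
    (hw : w ∈ convexHull 𝕜 (s : Set E)) (hwc : f w = c) :
    w ∈ convexHull 𝕜 (s.filter (f · = c) : Set E) := by
  obtain ⟨μ, hμ0, hμ1, rfl⟩ := Finset.mem_convexHull'.mp hw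
  have hslack : ∑ v ∈ s, μ v * (c - f v) = 0 := by
    simp only [mul_sub, Finset.sum_sub_distrib, ← Finset.sum_mul, hμ1, one_mul, ← hwc, map_sum,
      map_smul, smul_eq_mul, sub_self]
  have hvanish : ∀ v ∈ s, f v ≠ c → μ v = 0 := fun v hv hne =>
    (mul_eq_zero.mp ((Finset.sum_eq_zero_iff_of_nonneg fun u hu =>
      mul_nonneg (hμ0 u hu) (sub_nonneg.mpr (hs u hu))).mp hslack v hv)).resolve_right
      (sub_ne_zero.mpr hne.symm)
  refine Finset.mem_convexHull'.mpr ⟨μ, fun v hv => hμ0 v (Finset.mem_filter.mp hv).1, ?_, ?_⟩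
  · rw [Finset.sum_filter_of_ne fun v hv h => by_contra fun hne => h (hvanish v hv hne), hμ1]
  · rw [Finset.sum_filter_of_ne fun v hv h => by_contra fun hne => h (by simp [hvanish v hv hne])]

section Polar

variable {n : ℕ} {K : Set (EuclideanSpace ℝ (Fin n))} {w y z : EuclideanSpace ℝ (Fin n)}

theorem polarSet_eq_biInter (K : Set (EuclideanSpace ℝ (Fin n))) :
    polarSet K = ⋂ y ∈ K, {x | ⟪x, y⟫ ≤ 1} := by
  ext x
  simp [polarSet]

theorem isClosed_polarSet (K : Set (EuclideanSpace ℝ (Fin n))) : IsClosed (polarSet K) := by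
  rw [polarSet_eq_biInter]
  exact isClosed_biInter fun y _ => isClosed_le (by fun_prop) continuous_const

theorem convex_polarSet (K : Set (EuclideanSpace ℝ (Fin n))) : Convex ℝ (polarSet K) := by
  rw [polarSet_eq_biInter]
  exact convex_iInter₂ fun y _ => convex_halfSpace_le ((innerₗ _).flip y).isLinear 1

theorem convex_normalCone (K : Set (EuclideanSpace ℝ (Fin n))) (z : EuclideanSpace ℝ (Fin n)) :
    Convex ℝ (normalCone K z) := by
  have : normalCone K z = ⋂ y ∈ K, {v | ⟪y - z, v⟫ ≤ 0} := by ext; simp [normalCone]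
  rw [this]
  exact convex_iInter₂ fun y _ => convex_halfSpace_le (innerₗ _ (y - z)).isLinear 0

theorem mem_interior_polarSet_of_forall_inner_lt (hK : IsCompact K) (hw : ∀ y ∈ K, ⟪w, y⟫ < 1) :
    w ∈ interior (polarSet K) := by
  have hnear : ∀ᶠ w' in nhds w, ∀ y ∈ K, ⟪w', y⟫ < 1 :=
    hK.eventually_forall_of_forall_eventually fun y hy =>
      (isOpen_lt (continuous_fst.inner continuous_snd) continuous_const).mem_nhds (hw y hy)
  exact mem_interior_iff_mem_nhds.mpr (hnear.mono fun w' h y hy => (h y hy).le)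

theorem notMem_interior_polarSet_of_inner_eq_one (hy : y ∈ K) (hwy : ⟪w, y⟫ = 1) :
    w ∉ interior (polarSet K) := by
  intro hw
  have hy0 : y ≠ 0 := by rintro rfl; simp at hwy
  -- pushing `w` along `y` stays in `K°` for a short while, but raises `⟪·, y⟫` above `1`
  have hpath : Filter.Tendsto (fun t : ℝ => w + t • y) (nhdsWithin 0 (Set.Ioi 0)) (nhds w) := by
    refine tendsto_nhdsWithin_of_tendsto_nhds ?_
    exact (by fun_prop : Continuous fun t : ℝ => w + t • y).tendsto' 0 w (by simp)
  obtain ⟨t, ht, ht0⟩ := ((hpath.eventually (isOpen_interior.mem_nhds hw)).and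
    self_mem_nhdsWithin).exists
  have hle : ⟪w + t • y, y⟫ ≤ 1 := interior_subset ht y hy
  rw [inner_add_left, real_inner_smul_left, real_inner_self_eq_norm_sq, hwy] at hle
  have : 0 < t * ‖y‖ ^ 2 := mul_pos ht0 (pow_pos (norm_pos_iff.mpr hy0) 2)
  linarith

theorem mem_frontier_polarSet_iff (hK : IsCompact K) :
    w ∈ frontier (polarSet K) ↔ w ∈ polarSet K ∧ ∃ y ∈ K, ⟪w, y⟫ = 1 := by
  rw [frontier, (isClosed_polarSet K).closure_eq]
  refine and_congr_right fun hw => ⟨fun hint => ?_, fun ⟨y, hy, hwy⟩ =>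
    notMem_interior_polarSet_of_inner_eq_one hy hwy⟩
  by_contra! hlt
  exact hint (mem_interior_polarSet_of_forall_inner_lt hK fun y hy =>
    lt_of_le_of_ne (hw y hy) (hlt y hy))

theorem inner_eq_one_of_mem_normalCone (hz : z ∈ K) (hwN : w ∈ normalCone K z)
    (hwP : w ∈ polarSet K) (hy : y ∈ K) (hwy : ⟪w, y⟫ = 1) : ⟪z, w⟫ = 1 := by
  have := hwN y hy
  rw [inner_sub_left, real_inner_comm, hwy] at this
  linarith [real_inner_comm z w ▸ hwP z hz]

end Polar

section Polyhedron

variable {n : ℕ} (V : Finset (EuclideanSpace ℝ (Fin n))) {w z : EuclideanSpace ℝ (Fin n)}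

theorem polarSet_subset_convexHull_insert_zero :
    polarSet {x | ∀ v ∈ V, ⟪x, v⟫ ≤ 1} ⊆ convexHull ℝ (insert 0 V : Finset _) := by
  intro w hw
  by_contra hc
  obtain ⟨f, u, hfu, hfw⟩ := geometric_hahn_banach_closed_point (convex_convexHull ℝ _)
    ((Finset.finite_toSet _).isClosed_convexHull ℝ) hc
  have hu : 0 < u := by simpa using hfu 0 (subset_convexHull ℝ _ (by simp))
  -- the separating functional, rescaled to be `≤ 1` on `V`, is a point of the polyhedron
  -- on which `⟪w, ·⟫` exceeds `1`
  set a := (InnerProductSpace.toDual ℝ _).symm f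
  have ha : ∀ x, ⟪a, x⟫ = f x := fun x => InnerProductSpace.toDual_symm_apply
  have hmem : u⁻¹ • a ∈ {x | ∀ v ∈ V, ⟪x, v⟫ ≤ 1} := fun v hv => by
    have := hfu v (subset_convexHull ℝ _ (by simp [hv]))
    rw [real_inner_smul_left, ha, inv_mul_le_iff₀ hu, mul_one]
    exact this.le
  have := hw _ hmem
  rw [real_inner_comm, real_inner_smul_left, ha, inv_mul_le_iff₀ hu, mul_one] at this
  linarith

theorem mem_convexHull_of_mem_polarSet_of_inner_eq_one (hz : z ∈ {x | ∀ v ∈ V, ⟪x, v⟫ ≤ 1})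
    (hwP : w ∈ polarSet {x | ∀ v ∈ V, ⟪x, v⟫ ≤ 1}) (hzw : ⟪z, w⟫ = 1) :
    w ∈ convexHull ℝ {v | v ∈ V ∧ ⟪z, v⟫ = 1} := by
  have hface := Finset.mem_convexHull_filter_of_le_of_eq (innerₗ _ z)
    (fun v hv => ?_) (polarSet_subset_convexHull_insert_zero V hwP) hzw
  · refine convexHull_mono (fun v hv => ?_) hface
    rw [Finset.mem_coe, Finset.mem_filter, Finset.mem_insert, innerₗ_apply_apply] at hv
    obtain ⟨rfl | hv, hzv⟩ := hv
    · simp at hzv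
    · exact ⟨hv, hzv⟩
  · rcases Finset.mem_insert.mp hv with rfl | hv
    · simp
    · exact hz v hv

theorem convexHull_subset_normalCone_inter_polarSet :
    convexHull ℝ {v | v ∈ V ∧ ⟪z, v⟫ = 1} ⊆ normalCone {x | ∀ v ∈ V, ⟪x, v⟫ ≤ 1} z ∩
      polarSet {x | ∀ v ∈ V, ⟪x, v⟫ ≤ 1} ∩ {w | ⟪z, w⟫ = 1} := by
  refine convexHull_min ?_ (((convex_normalCone _ z).inter (convex_polarSet _)).inter
    (convex_hyperplane (innerₗ _ z).isLinear 1))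
  rintro v ⟨hv, hzv⟩
  refine ⟨⟨fun x hx => ?_, fun x hx => ?_⟩, hzv⟩
  · rw [inner_sub_left, hzv]
    linarith [hx v hv]
  · rw [real_inner_comm]
    exact hx v hv

end Polyhedron

/-- The facets of `K` containing the smallest face of `K` through `z` are exactly those containing
`z`, i.e. those with normal `v ∈ V` satisfying `⟪z, v⟫ = 1`. -/
theorem normalCone_inter_frontier_polar_eq_convexHull_general {n : ℕ}
    (V : Finset (EuclideanSpace ℝ (Fin n))) (K : Set (EuclideanSpace ℝ (Fin n)))
    (hK : K = {x | ∀ v ∈ V, ⟪x, v⟫ ≤ 1})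
    (hKc : IsCompact K)
    (z : EuclideanSpace ℝ (Fin n)) (hz : z ∈ frontier K) :
    normalCone K z ∩ frontier (polarSet K)
      = convexHull ℝ {v : EuclideanSpace ℝ (Fin n) | v ∈ V ∧ ⟪z, v⟫ = 1} := by
  have hzK : z ∈ K := hKc.isClosed.frontier_subset hz
  ext w
  rw [Set.mem_inter_iff, mem_frontier_polarSet_iff hKc]
  subst hK
  constructor
  · rintro ⟨hwN, hwP, y, hy, hwy⟩
    exact mem_convexHull_of_mem_polarSet_of_inner_eq_one V hzK hwP
      (inner_eq_one_of_mem_normalCone hzK hwN hwP hy hwy)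
  · intro hw
    obtain ⟨⟨hwN, hwP⟩, hzw⟩ := convexHull_subset_normalCone_inter_polarSet V hw
    exact ⟨hwN, hwP, z, hzK, real_inner_comm z w ▸ hzw⟩

/-- Let `K` be a polytope with `0` in its interior, presented as the intersection of the
halfspaces `{x | ⟪x, v⟫ ≤ 1}` over the finitely many (normalized) outer facet normals `v ∈ V`
(which are then the vertices of `K°`, and the facets of `K` are the sets `K ∩ {x | ⟪x, v⟫ = 1}`).
For `z ∈ ∂K`, the facets of `K` containing the smallest face of `K` containing `z` are exactly
those containing `z`, i.e. those with normal `v ∈ V` satisfying `⟪z, v⟫ = 1`.  Then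
`N(K, z) ∩ ∂K°` equals the convex hull of these facet normals. -/
theorem normalCone_inter_frontier_polar_eq_convexHull {n : ℕ}
    (V : Finset (EuclideanSpace ℝ (Fin n))) (K : Set (EuclideanSpace ℝ (Fin n)))
    (hK : K = {x | ∀ v ∈ V, ⟪x, v⟫ ≤ 1})
    (hKc : IsCompact K) (h0 : (0 : EuclideanSpace ℝ (Fin n)) ∈ interior K)
    (z : EuclideanSpace ℝ (Fin n)) (hz : z ∈ frontier K) :
    normalCone K z ∩ frontier (polarSet K)
      = convexHull ℝ {v : EuclideanSpace ℝ (Fin n) | v ∈ V ∧ ⟪z, v⟫ = 1} :=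
  normalCone_inter_frontier_polar_eq_convexHull_general V K hK hKc z hz
end

section
/- For x ∈ U, the set K_x := x − ρ(x)·K satisfies int(K_x) ⊂ U, and ∂K_x ∩ ∂U equals the set of ρ-closest points on ∂U to x, i.e. the set of y ∈ ∂U with γ_K(x − y) = ρ(x). -/
open RealInnerProductSpace Topology

/-- The distance to `∂U` with respect to the gauge of `K`. -/
noncomputable def distGauge {n : ℕ} (K U : Set (EuclideanSpace ℝ (Fin n)))
    (x : EuclideanSpace ℝ (Fin n)) : ℝ :=
  sInf ((fun y => gauge K (x - y)) '' frontier U)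

/-- For `x ∈ U`, the set `K_x := x − ρ(x)·K` satisfies `int(K_x) ⊆ U`, and
`∂K_x ∩ ∂U` equals the set of `ρ`-closest points on `∂U` to `x`. -/
theorem interior_Kx_subset_and_frontier_inter {n : ℕ} (K U : Set (EuclideanSpace ℝ (Fin n)))
    (hKc : IsCompact K) (hKconv : Convex ℝ K) (h0 : (0 : EuclideanSpace ℝ (Fin n)) ∈ interior K)
    (hU : IsOpen U) (hUb : Bornology.IsBounded U) (hUne : (frontier U).Nonempty)
    (x : EuclideanSpace ℝ (Fin n)) (hx : x ∈ U) :
    interior ((fun z => x - distGauge K U x • z) '' K) ⊆ U ∧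
    frontier ((fun z => x - distGauge K U x • z) '' K) ∩ frontier U
      = {y ∈ frontier U | gauge K (x - y) = distGauge K U x} := by
  set ρ := distGauge K U x with hρdef
  have hKnhds : K ∈ 𝓝 (0 : EuclideanSpace ℝ (Fin n)) := mem_interior_iff_mem_nhds.mp h0
  have habs : Absorbent ℝ K := absorbent_nhds_zero hKnhds
  -- lower bound on ρ
  obtain ⟨R, hRK⟩ := hKc.isBounded.subset_ball 0
  have hR : 0 < R := by
    by_contra h
    have := hRK (mem_of_mem_nhds hKnhds)
    simp [Metric.mem_ball] at this
    linarith [dist_nonneg (x := (0 : EuclideanSpace ℝ (Fin n))) (y := 0), this]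
  obtain ⟨ε, hε, hball⟩ := Metric.isOpen_iff.mp hU x hx
  have hfrU : ∀ y ∈ frontier U, ε / R ≤ gauge K (x - y) := by
    intro y hy
    have hynU : y ∉ U := fun h => hy.2 (by rwa [hU.interior_eq])
    have hdist : ε ≤ ‖x - y‖ := by
      by_contra h
      push_neg at h
      exact hynU (hball (by simpa [Metric.mem_ball, dist_eq_norm, norm_sub_rev] using h))
    calc ε / R ≤ ‖x - y‖ / R := by gcongr
    _ = gauge (Metric.ball (0 : EuclideanSpace ℝ (Fin n)) R) (x - y) := (gauge_ball hR.le _).symm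
    _ ≤ gauge K (x - y) := gauge_mono habs hRK _
  have hbdd : BddBelow ((fun y => gauge K (x - y)) '' frontier U) :=
    ⟨0, fun a ⟨y, _, hy⟩ => hy ▸ gauge_nonneg _⟩
  have hρlb : ε / R ≤ ρ := le_csInf (hUne.image _) (fun a ⟨y, hy, h⟩ => h ▸ hfrU y hy)
  have hρpos : 0 < ρ := lt_of_lt_of_le (by positivity) hρlb
  have hρle : ∀ y ∈ frontier U, ρ ≤ gauge K (x - y) := fun y hy =>
    csInf_le hbdd ⟨y, hy, rfl⟩
  -- the homeomorphism z ↦ x - ρ • z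
  set e : EuclideanSpace ℝ (Fin n) ≃ₜ EuclideanSpace ℝ (Fin n) :=
    (Homeomorph.smulOfNeZero ρ hρpos.ne').trans (Homeomorph.subLeft x) with he
  have heapp : ∀ z, e z = x - ρ • z := fun z => rfl
  have hesymm : ∀ w, e.symm w = ρ⁻¹ • (x - w) := fun w => by
    apply e.injective
    rw [e.apply_symm_apply, heapp, smul_inv_smul₀ hρpos.ne']
    abel
  have hgauge_symm : ∀ w, gauge K (e.symm w) = ρ⁻¹ * gauge K (x - w) := fun w => by
    rw [hesymm, gauge_smul_of_nonneg (by positivity : (0:ℝ) ≤ ρ⁻¹), smul_eq_mul]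
  have hmemimg : ∀ (S : Set (EuclideanSpace ℝ (Fin n))) w, w ∈ e '' S ↔ e.symm w ∈ S :=
    fun S w => ⟨fun ⟨z, hz, h⟩ => by rw [← h, e.symm_apply_apply]; exact hz,
      fun h => ⟨e.symm w, h, e.apply_symm_apply w⟩⟩
  have himg : (fun z => x - ρ • z) '' K = e '' K := rfl
  -- membership characterizations
  have hmem_int : ∀ w, w ∈ interior (e '' K) ↔ gauge K (x - w) < ρ := by
    intro w
    rw [← e.image_interior, hmemimg]
    rw [← gauge_lt_one_iff_mem_interior hKconv hKnhds, hgauge_symm]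
    rw [inv_mul_lt_iff₀ hρpos, mul_one]
  have hmem_fr : ∀ w, w ∈ frontier (e '' K) ↔ gauge K (x - w) = ρ := by
    intro w
    rw [← e.image_frontier, hmemimg]
    rw [← gauge_eq_one_iff_mem_frontier hKconv hKnhds, hgauge_symm]
    constructor
    · intro h
      have h2 := congrArg (ρ * ·) h
      simpa only [mul_inv_cancel_left₀ hρpos.ne', mul_one] using h2
    · intro h; rw [h, inv_mul_cancel₀ hρpos.ne']
  constructor
  · -- interior K_x ⊆ U
    rw [himg]
    intro w hw
    rw [hmem_int w] at hw
    by_contra hwU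
    -- segment from x to w crosses frontier U
    have hconn : IsPreconnected (segment ℝ x w) := (convex_segment x w).isPreconnected
    have hcross : (segment ℝ x w ∩ frontier U).Nonempty := by
      by_contra hemp
      rw [Set.not_nonempty_iff_eq_empty] at hemp
      have hsub : segment ℝ x w ⊆ U ∪ (closure U)ᶜ := by
        intro p hp
        by_cases hpU : p ∈ U
        · exact Or.inl hpU
        · right
          intro hpc
          have : p ∈ frontier U := ⟨hpc, by rwa [hU.interior_eq]⟩
          exact Set.eq_empty_iff_forall_notMem.mp hemp p ⟨hp, this⟩
      have hd : Disjoint U (closure U)ᶜ :=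
        Set.disjoint_compl_right_iff_subset.mpr subset_closure
      rcases hconn.subset_or_subset hU isClosed_closure.isOpen_compl hd hsub with h | h
      · exact hwU (h (right_mem_segment ℝ x w))
      · exact (h (left_mem_segment ℝ x w)) (subset_closure hx)
    obtain ⟨y, hyseg, hyfr⟩ := hcross
    obtain ⟨a, b, ha, hb, hab, hy⟩ := hyseg
    have hxy : x - y = b • (x - w) := by
      have ha' : a = 1 - b := by linarith
      subst ha'
      rw [← hy]
      module
    have : gauge K (x - y) < ρ := by
      rw [hxy, gauge_smul_of_nonneg hb, smul_eq_mul]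
      calc b * gauge K (x - w) ≤ 1 * gauge K (x - w) := by
            apply mul_le_mul_of_nonneg_right _ (gauge_nonneg _)
            linarith
      _ = gauge K (x - w) := one_mul _
      _ < ρ := hw
    exact absurd (hρle y hyfr) (by linarith)
  · -- frontier equality
    rw [himg]
    ext y
    simp only [Set.mem_inter_iff, Set.mem_setOf_eq, hmem_fr y]
    tauto
end

section
/- If y is a ρ-closest point on ∂U to x ∈ U, then y is a ρ-closest point to every point z on the segment [x, y], and ρ varies linearly along [x, y]: for 0 ≤ t ≤ γ_K(x − y), ρ(x − (t/γ_K(x−y))(x − y)) = γ_K(x − y) − t. If moreover y is the unique ρ-closest point to x, it is the unique ρ-closest point to every point of [x, y]. -/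
open RealInnerProductSpace

/-- If `y` is a `ρ`-closest point on `∂U` to `x ∈ U`, then `y` is a `ρ`-closest point to every
point `z ∈ [x, y]`, and `ρ` varies linearly along `[x, y]`:
`ρ(x − (t/γ_K(x−y))(x − y)) = γ_K(x − y) − t` for `0 ≤ t ≤ γ_K(x − y)`.  If moreover `y` is the
unique `ρ`-closest point to `x`, then it is the unique `ρ`-closest point to every `z ∈ [x, y]`. -/
theorem closest_point_along_segment {n : ℕ} (K U : Set (EuclideanSpace ℝ (Fin n)))
    (hKc : IsCompact K) (hKconv : Convex ℝ K) (h0 : (0 : EuclideanSpace ℝ (Fin n)) ∈ interior K)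
    (hU : IsOpen U) (hUb : Bornology.IsBounded U) (hUne : (frontier U).Nonempty)
    (x : EuclideanSpace ℝ (Fin n)) (hx : x ∈ U)
    (y : EuclideanSpace ℝ (Fin n)) (hy : y ∈ frontier U)
    (hclosest : gauge K (x - y) = distGauge K U x) :
    (∀ z ∈ segment ℝ x y, gauge K (z - y) = distGauge K U z) ∧
    (∀ t : ℝ, 0 ≤ t → t ≤ gauge K (x - y) →
      distGauge K U (x - (t / gauge K (x - y)) • (x - y)) = gauge K (x - y) - t) ∧
    ((∀ y' ∈ frontier U, gauge K (x - y') = distGauge K U x → y' = y) →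
      ∀ z ∈ segment ℝ x y, ∀ y' ∈ frontier U, gauge K (z - y') = distGauge K U z → y' = y) := by
  have habs : Absorbent ℝ K := absorbent_nhds_zero (mem_interior_iff_mem_nhds.mp h0)
  have hbdd : ∀ w, BddBelow ((fun y => gauge K (w - y)) '' frontier U) := fun w =>
    ⟨0, fun r ⟨y', _, hy'⟩ => hy' ▸ gauge_nonneg _⟩
  have hle : ∀ w, ∀ y' ∈ frontier U, distGauge K U w ≤ gauge K (w - y') := fun w y' hy' =>
    csInf_le (hbdd w) ⟨y', hy', rfl⟩
  -- reverse triangle inequality for distGauge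
  have htri : ∀ w z : EuclideanSpace ℝ (Fin n),
      distGauge K U w ≤ gauge K (w - z) + distGauge K U z := by
    intro w z
    rw [← sub_le_iff_le_add']
    refine le_csInf (hUne.image _) ?_
    rintro r ⟨y', hy', rfl⟩
    have h3 : gauge K (w - y') ≤ gauge K (w - z) + gauge K (z - y') := by
      have := gauge_add_le hKconv habs (w - z) (z - y')
      simpa using this
    have := (hle w y' hy').trans h3
    linarith
  -- main: closest along segment
  have hmain : ∀ z ∈ segment ℝ x y, gauge K (z - y) = distGauge K U z := by
    rintro z ⟨a, b, ha, hb, hab, rfl⟩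
    obtain rfl : b = 1 - a := by linarith
    have ha1 : a ≤ 1 := by linarith
    have hzy : a • x + (1 - a) • y - y = a • (x - y) := by module
    have hxz : x - (a • x + (1 - a) • y) = (1 - a) • (x - y) := by module
    have hg1 : gauge K (a • x + (1 - a) • y - y) = a * gauge K (x - y) := by
      rw [hzy, gauge_smul_of_nonneg ha]; rfl
    have hg2 : gauge K (x - (a • x + (1 - a) • y)) = (1 - a) * gauge K (x - y) := by
      rw [hxz, gauge_smul_of_nonneg (by linarith : (0:ℝ) ≤ 1 - a)]; rfl
    refine le_antisymm ?_ (hle _ y hy)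
    have h1 := htri x (a • x + (1 - a) • y)
    rw [← hclosest, hg2] at h1
    rw [hg1]
    nlinarith [h1]
  refine ⟨hmain, ?_, ?_⟩
  · intro t ht htle
    rcases (gauge_nonneg (x - y)).eq_or_lt with hg0 | hg0
    · have ht0 : t = 0 := le_antisymm (htle.trans hg0.ge) ht
      subst ht0
      simp only [zero_div, zero_smul, sub_zero]
      exact hclosest.symm
    · set g := gauge K (x - y) with hgdef
      have hs0 : 0 ≤ t / g := div_nonneg ht hg0.le
      have hs1 : t / g ≤ 1 := (div_le_one hg0).mpr htle
      have hz : x - (t / g) • (x - y) ∈ segment ℝ x y :=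
        ⟨1 - t / g, t / g, by linarith, hs0, by ring, by module⟩
      rw [← hmain _ hz]
      have hrw : x - (t / g) • (x - y) - y = (1 - t / g) • (x - y) := by module
      rw [hrw, gauge_smul_of_nonneg (by linarith : (0:ℝ) ≤ 1 - t / g)]
      simp only [smul_eq_mul, ← hgdef]
      field_simp
  · rintro huniq z ⟨a, b, ha, hb, hab, rfl⟩ y' hy' hcl'
    obtain rfl : b = 1 - a := by linarith
    apply huniq y' hy'
    have hxz : x - (a • x + (1 - a) • y) = (1 - a) • (x - y) := by module
    have hg2 : gauge K (x - (a • x + (1 - a) • y)) = (1 - a) * gauge K (x - y) := by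
      rw [hxz, gauge_smul_of_nonneg (by linarith : (0:ℝ) ≤ 1 - a)]; rfl
    have hzy : a • x + (1 - a) • y - y = a • (x - y) := by module
    have hg1 : gauge K (a • x + (1 - a) • y - y) = a * gauge K (x - y) := by
      rw [hzy, gauge_smul_of_nonneg ha]; rfl
    have hdz : distGauge K U (a • x + (1 - a) • y) = a * gauge K (x - y) := by
      rw [← hmain _ ⟨a, 1 - a, ha, by linarith, by ring, rfl⟩, hg1]
    have h1 : gauge K (x - y') ≤ gauge K (x - (a • x + (1 - a) • y)) +
        gauge K (a • x + (1 - a) • y - y') := by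
      have := gauge_add_le hKconv habs (x - (a • x + (1 - a) • y)) (a • x + (1 - a) • y - y')
      simpa using this
    have h2 := hle x y' hy'
    rw [← hclosest] at h2
    rw [← hclosest]
    refine le_antisymm ?_ h2
    calc gauge K (x - y') ≤ _ := h1
      _ = (1 - a) * gauge K (x - y) + a * gauge K (x - y) := by rw [hg2, hcl', hdz]
      _ = gauge K (x - y) := by ring
end

section
/- Let U ⊂ ℝⁿ be bounded open with C¹ boundary and inward unit normal ν, let x ∈ U, and let y ∈ ∂U be a ρ-closest point to x. Then (x − y)/γ_K(x − y) belongs to the subdifferential ∂γ_{K°}(ν(y)); in particular, if γ_{K°} is differentiable at ν(y), then x = y + ρ(x)·Dγ_{K°}(ν(y)). -/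
/-!
Write `ρ = γ_K(x - y) > 0` and `w = (x - y)/ρ`, so `γ_K(w) = 1` and `w ∈ K`. Since `y` is a
closest boundary point, the open gauge ball `{z | γ_K(x - z) < ρ}` lies in `U`: a segment from
`x` leaving `U` would cross `∂U` at a point closer to `x`. Hence for `γ_K(b) < ρ` the direction
`x - y - b` points from `y` into `U`, where `f > 0 ≥ f(y)`; so `y` minimises `f` on `U` and
Fermat's rule gives `⟪∇f(y), b⟫ ≤ ⟪∇f(y), x - y⟫`. Letting `b` run through `ρ K`, `w` maximises
`⟪ν, ·⟫` on `K`. As `γ_{K°}` is the support function of `K`, such a maximiser is a subgradient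
of `γ_{K°}` at `ν`, and a subgradient at a point of differentiability is the gradient.
-/

open RealInnerProductSpace

open Set Filter Topology

theorem IsPreconnected.inter_frontier_nonempty {X : Type*} [TopologicalSpace X] {s t : Set X}
    (hs : IsPreconnected s) (hst : (s ∩ t).Nonempty) (hst' : (s \ t).Nonempty) :
    (s ∩ frontier t).Nonempty := by
  by_contra h
  have hcover : s ⊆ interior t ∪ (closure t)ᶜ := fun p hp => by
    by_cases hpc : p ∈ closure t
    · exact Or.inl (by_contra fun hpi => h ⟨p, hp, hpc, hpi⟩)
    · exact Or.inr hpc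
  rcases hs.subset_or_subset isOpen_interior isClosed_closure.isOpen_compl
      (disjoint_compl_right_iff_subset.2 interior_subset_closure) hcover with hin | hout
  · obtain ⟨p, hp, hpt⟩ := hst'
    exact hpt (interior_subset (hin hp))
  · obtain ⟨p, hp, hpt⟩ := hst
    exact hout hp (subset_closure hpt)

theorem isLocalMinOn_of_inter_eq_setOf_pos {X : Type*} [TopologicalSpace X] {U V : Set X}
    {f : X → ℝ} {y : X} (hV : V ∈ 𝓝 y) (hy : y ∈ V \ U) (hUV : U ∩ V = {z ∈ V | 0 < f z}) :
    IsLocalMinOn f U y := by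
  have hfy : f y ≤ 0 := not_lt.1 fun hpos => hy.2 (hUV ▸ ⟨hy.1, hpos⟩ : y ∈ U ∩ V).1
  filter_upwards [self_mem_nhdsWithin, mem_nhdsWithin_of_mem_nhds hV] with z hzU hzV
  have hz : z ∈ U ∩ V := ⟨hzU, hzV⟩
  rw [hUV] at hz
  linarith [hz.2]

section Gauge

variable {E : Type*} [AddCommGroup E] [Module ℝ E] {K : Set E}

theorem gauge_convexCombo_lt (hK : Convex ℝ K) (hKa : Absorbent ℝ K) {a b : E}
    (hb : gauge K b < gauge K a) {t : ℝ} (ht₀ : 0 < t) (ht₁ : t ≤ 1) :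
    gauge K ((1 - t) • a + t • b) < gauge K a :=
  calc gauge K ((1 - t) • a + t • b) ≤ gauge K ((1 - t) • a) + gauge K (t • b) :=
        gauge_add_le hK hKa _ _
    _ = (1 - t) * gauge K a + t * gauge K b := by
        rw [gauge_smul_of_nonneg (sub_nonneg.2 ht₁), gauge_smul_of_nonneg ht₀.le, smul_eq_mul,
          smul_eq_mul]
    _ < gauge K a := by nlinarith

variable [TopologicalSpace E] [IsTopologicalAddGroup E] [ContinuousSMul ℝ E]

theorem mem_of_gauge_sub_lt {U : Set E} {x z : E} {r : ℝ} (hx : x ∈ U)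
    (hfr : ∀ p ∈ frontier U, r ≤ gauge K (x - p)) (hz : gauge K (x - z) < r) : z ∈ U := by
  by_contra hzU
  obtain ⟨_, ⟨a, b, ha, hb, hab, rfl⟩, hp⟩ :=
    (convex_segment x z).isPreconnected.inter_frontier_nonempty
      ⟨x, left_mem_segment ℝ x z, hx⟩ ⟨z, right_mem_segment ℝ x z, hzU⟩
  obtain rfl : a = 1 - b := by linarith
  have hrb := hfr _ hp
  rw [show x - ((1 - b) • x + b • z) = b • (x - z) by module, gauge_smul_of_nonneg hb,
    smul_eq_mul] at hrb
  nlinarith [gauge_nonneg (s := K) (x - z)]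

end Gauge

section InnerProduct

variable {F : Type*} [NormedAddCommGroup F] [InnerProductSpace ℝ F]

theorem inner_le_of_forall_gauge_lt {K : Set F} {g u : F} {c r : ℝ} (hr : 0 < r)
    (h : ∀ b, gauge K b < r → ⟪g, b⟫ ≤ c) (hu : u ∈ K) : ⟪g, r • u⟫ ≤ c := by
  have hlim : Tendsto (fun s : ℝ => s * ⟪g, r • u⟫) (𝓝[<] 1) (𝓝 ⟪g, r • u⟫) := by
    simpa using ((tendsto_id (x := 𝓝 (1 : ℝ))).mul_const ⟪g, r • u⟫).mono_left nhdsWithin_le_nhds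
  refine le_of_tendsto hlim ?_
  filter_upwards [Ioo_mem_nhdsLT zero_lt_one] with s hs
  rw [← real_inner_smul_right]
  refine h _ ?_
  rw [gauge_smul_of_nonneg hs.1.le, gauge_smul_of_nonneg hr.le, smul_eq_mul, smul_eq_mul]
  nlinarith [mul_le_mul_of_nonneg_left (gauge_le_one_of_mem hu) (mul_nonneg hs.1.le hr.le),
    mul_lt_of_lt_one_left hr hs.2]

variable [CompleteSpace F]

theorem IsLocalMinOn.inner_gradient_nonneg {f : F → ℝ} {s : Set F} {a g d : F}
    (h : IsLocalMinOn f s a) (hf : HasGradientAt f g a) (hd : d ∈ posTangentConeAt s a) :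
    0 ≤ ⟪g, d⟫ := by
  simpa using h.hasFDerivWithinAt_nonneg hf.hasFDerivAt.hasFDerivWithinAt hd

theorem inner_gradient_le_of_gauge_lt {K U : Set F} {f : F → ℝ} {x y g b : F}
    (hK : Convex ℝ K) (hKa : Absorbent ℝ K) (hx : x ∈ U)
    (hclosest : ∀ p ∈ frontier U, gauge K (x - y) ≤ gauge K (x - p))
    (hmin : IsLocalMinOn f U y) (hg : HasGradientAt f g y)
    (hb : gauge K b < gauge K (x - y)) : ⟪g, b⟫ ≤ ⟪g, x - y⟫ := by
  have hinto : ∀ᶠ t in 𝓝[>] (0 : ℝ), y + t • (x - y - b) ∈ U := by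
    filter_upwards [Ioc_mem_nhdsGT zero_lt_one] with t ht
    refine mem_of_gauge_sub_lt hx hclosest ?_
    rw [show x - (y + t • (x - y - b)) = (1 - t) • (x - y) + t • b by module]
    exact gauge_convexCombo_lt hK hKa hb ht.1 ht.2
  have hd := hmin.inner_gradient_nonneg hg (mem_posTangentConeAt_of_frequently_mem hinto.frequently)
  rw [inner_sub_right] at hd
  linarith

end InnerProduct

section Polar

variable {n : ℕ} {K : Set (EuclideanSpace ℝ (Fin n))}

theorem absorbent_polarSet (hK : Bornology.IsBounded K) : Absorbent ℝ (polarSet K) := by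
  obtain ⟨R, hR, hKR⟩ := hK.exists_pos_norm_le
  refine absorbent_nhds_zero (mem_of_superset (Metric.ball_mem_nhds 0 (inv_pos.2 hR))
    fun p hp u hu => ?_)
  calc ⟪p, u⟫ ≤ ‖p‖ * ‖u‖ := real_inner_le_norm p u
    _ ≤ R⁻¹ * R := mul_le_mul (mem_ball_zero_iff.1 hp).le (hKR u hu) (norm_nonneg u)
        (inv_nonneg.2 hR.le)
    _ = 1 := inv_mul_cancel₀ hR.ne'

theorem inner_le_gauge_polarSet (hK : Bornology.IsBounded K) {w : EuclideanSpace ℝ (Fin n)}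
    (hw : w ∈ K) (z : EuclideanSpace ℝ (Fin n)) : ⟪z, w⟫ ≤ gauge (polarSet K) z := by
  refine le_csInf (absorbent_polarSet hK).gauge_set_nonempty ?_
  rintro r ⟨hr, p, hp, rfl⟩
  rw [real_inner_smul_left]
  simpa using mul_le_mul_of_nonneg_left (hp w hw) hr.le

theorem gauge_polarSet_le {ν : EuclideanSpace ℝ (Fin n)} {c : ℝ} (hc : 0 ≤ c)
    (h : ∀ u ∈ K, ⟪ν, u⟫ ≤ c) : gauge (polarSet K) ν ≤ c := by
  refine le_of_forall_pos_le_add fun ε hε => gauge_le_of_mem (by linarith) ?_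
  have hcε : 0 < c + ε := by linarith
  refine ⟨(c + ε)⁻¹ • ν, fun u hu => ?_, smul_inv_smul₀ hcε.ne' ν⟩
  rw [real_inner_smul_left, inv_mul_le_iff₀ hcε]
  linarith [h u hu]

theorem mem_subdiff_of_inner_le {γ : EuclideanSpace ℝ (Fin n) → ℝ}
    {ν w : EuclideanSpace ℝ (Fin n)} (hle : ∀ z, ⟪z, w⟫ ≤ γ z) (hν : γ ν ≤ ⟪ν, w⟫) :
    w ∈ subdiff γ ν := fun z => by
  rw [inner_sub_left]
  linarith [hle z]

theorem mem_subdiff_gauge_polarSet (hK : Bornology.IsBounded K) (h0 : 0 ∈ K)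
    {ν w : EuclideanSpace ℝ (Fin n)} (hw : w ∈ K) (hmax : ∀ u ∈ K, ⟪ν, u⟫ ≤ ⟪ν, w⟫) :
    w ∈ subdiff (gauge (polarSet K)) ν :=
  mem_subdiff_of_inner_le (inner_le_gauge_polarSet hK hw)
    (gauge_polarSet_le (by simpa using hmax 0 h0) hmax)

theorem eq_of_mem_subdiff_of_hasGradientAt {γ : EuclideanSpace ℝ (Fin n) → ℝ}
    {ν v w : EuclideanSpace ℝ (Fin n)} (hw : w ∈ subdiff γ ν) (hv : HasGradientAt γ v ν) :
    w = v := by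
  set L := InnerProductSpace.toDual ℝ (EuclideanSpace ℝ (Fin n))
  have hmin : IsLocalMin (fun z => γ z - L w z) ν := Eventually.of_forall fun z => by
    have := hw z
    simp only [L, InnerProductSpace.toDual_apply_apply, inner_sub_left] at this ⊢
    linarith [real_inner_comm ν w, real_inner_comm z w]
  have hzero := hmin.hasFDerivAt_eq_zero (hv.hasFDerivAt.sub (L w).hasFDerivAt)
  exact L.injective (sub_eq_zero.1 hzero).symm

end Polar

theorem distGauge_le {n : ℕ} {K U : Set (EuclideanSpace ℝ (Fin n))}
    {x z : EuclideanSpace ℝ (Fin n)} (hz : z ∈ frontier U) : distGauge K U x ≤ gauge K (x - z) :=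
  csInf_le ⟨0, by rintro _ ⟨p, -, rfl⟩; exact gauge_nonneg _⟩ ⟨z, hz, rfl⟩

theorem closest_point_normal_direction_general {n : ℕ} (K U : Set (EuclideanSpace ℝ (Fin n)))
    (hKc : IsCompact K) (hKconv : Convex ℝ K) (h0 : (0 : EuclideanSpace ℝ (Fin n)) ∈ interior K)
    (hU : IsOpen U)
    (x : EuclideanSpace ℝ (Fin n)) (hx : x ∈ U)
    (y : EuclideanSpace ℝ (Fin n)) (hy : y ∈ frontier U)
    (hclosest : gauge K (x - y) = distGauge K U x)
    (V : Set (EuclideanSpace ℝ (Fin n))) (hV : IsOpen V) (hyV : y ∈ V)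
    (f : EuclideanSpace ℝ (Fin n) → ℝ) (hf : ContDiffOn ℝ 1 f V)
    (hUV : U ∩ V = {z ∈ V | 0 < f z})
    (ν : EuclideanSpace ℝ (Fin n)) (hν : ν = ‖gradient f y‖⁻¹ • gradient f y) :
    (gauge K (x - y))⁻¹ • (x - y) ∈ subdiff (gauge (polarSet K)) ν ∧
    (∀ v : EuclideanSpace ℝ (Fin n), HasGradientAt (gauge (polarSet K)) v ν →
      x = y + distGauge K U x • v) := by
  have hKnhds : K ∈ 𝓝 0 := mem_interior_iff_mem_nhds.1 h0
  have hKa : Absorbent ℝ K := absorbent_nhds_zero hKnhds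
  have hyU : y ∉ U := fun hyU => (hU.frontier_eq ▸ hy).2 hyU
  have hρ : 0 < gauge K (x - y) :=
    (gauge_pos hKa ((NormedSpace.isVonNBounded_iff ℝ).2 hKc.isBounded)).2
      (sub_ne_zero.2 fun h => hyU (h ▸ hx))
  set w := (gauge K (x - y))⁻¹ • (x - y)
  have hwK : w ∈ K := by
    rw [← hKc.isClosed.closure_eq, ← gauge_le_one_iff_mem_closure hKconv hKnhds,
      gauge_smul_of_nonneg (inv_nonneg.2 hρ.le), smul_eq_mul, inv_mul_cancel₀ hρ.ne']
  have hmin := isLocalMinOn_of_inter_eq_setOf_pos (hV.mem_nhds hyV) ⟨hyV, hyU⟩ hUV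
  have hg : HasGradientAt f (gradient f y) y :=
    ((hf.differentiableOn one_ne_zero).differentiableAt (hV.mem_nhds hyV)).hasGradientAt
  have hmax : ∀ u ∈ K, ⟪ν, u⟫ ≤ ⟪ν, w⟫ := fun u hu => by
    have hρu := inner_le_of_forall_gauge_lt hρ (fun b => inner_gradient_le_of_gauge_lt hKconv hKa
      hx (fun p hp => hclosest.trans_le (distGauge_le hp)) hmin hg) hu
    rw [real_inner_smul_right, ← le_inv_mul_iff₀ hρ] at hρu
    rw [hν, real_inner_smul_left, real_inner_smul_left, real_inner_smul_right]
    exact mul_le_mul_of_nonneg_left hρu (inv_nonneg.2 (norm_nonneg _))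
  have hsub := mem_subdiff_gauge_polarSet hKc.isBounded (interior_subset h0) hwK hmax
  refine ⟨hsub, fun v hv => ?_⟩
  rw [← eq_of_mem_subdiff_of_hasGradientAt hsub hv, ← hclosest, smul_inv_smul₀ hρ.ne',
    add_sub_cancel]

/-- Let `U` be bounded open with `C¹` boundary near `y` (locally `U = {f > 0}` and
`∂U = {f = 0}` for a `C¹` function `f` with nonvanishing gradient), with inward unit normal
`ν = ∇f(y)/‖∇f(y)‖` at `y`.  If `y ∈ ∂U` is a `ρ`-closest point to `x ∈ U`, then
`(x − y)/γ_K(x − y) ∈ ∂γ_{K°}(ν)`; in particular, if `γ_{K°}` is differentiable at `ν` with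
gradient `v`, then `x = y + ρ(x) • v`. -/
theorem closest_point_normal_direction {n : ℕ} (K U : Set (EuclideanSpace ℝ (Fin n)))
    (hKc : IsCompact K) (hKconv : Convex ℝ K) (h0 : (0 : EuclideanSpace ℝ (Fin n)) ∈ interior K)
    (hU : IsOpen U) (hUb : Bornology.IsBounded U)
    (x : EuclideanSpace ℝ (Fin n)) (hx : x ∈ U)
    (y : EuclideanSpace ℝ (Fin n)) (hy : y ∈ frontier U)
    (hclosest : gauge K (x - y) = distGauge K U x)
    (V : Set (EuclideanSpace ℝ (Fin n))) (hV : IsOpen V) (hyV : y ∈ V)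
    (f : EuclideanSpace ℝ (Fin n) → ℝ) (hf : ContDiffOn ℝ 1 f V)
    (hUV : U ∩ V = {z ∈ V | 0 < f z}) (hbV : frontier U ∩ V = {z ∈ V | f z = 0})
    (hgrad : ∀ z ∈ V, gradient f z ≠ 0)
    (ν : EuclideanSpace ℝ (Fin n)) (hν : ν = ‖gradient f y‖⁻¹ • gradient f y) :
    (gauge K (x - y))⁻¹ • (x - y) ∈ subdiff (gauge (polarSet K)) ν ∧
    (∀ v : EuclideanSpace ℝ (Fin n), HasGradientAt (gauge (polarSet K)) v ν →
      x = y + distGauge K U x • v) :=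
  closest_point_normal_direction_general K U hKc hKconv h0 hU x hx y hy hclosest V hV hyV f hf hUV ν
    hν
end

section
/- In ℝ², the distance from a point x with x₂ > x₁² (above the parabola x₂ = x₁²) to the parabola with respect to the maximum norm |·|_∞ equals √(|x₁| + x₂ + 1/4) − |x₁| − 1/2. -/
/-- The distance from a point `x` to a set `S ⊆ ℝ²` with respect to the maximum norm. -/
noncomputable def dInfty (x : ℝ × ℝ) (S : Set (ℝ × ℝ)) : ℝ :=
  sInf ((fun y => max |x.1 - y.1| |x.2 - y.2|) '' S)

/-- In `ℝ²`, the distance from a point `x` above the parabola `x₂ = x₁²` to the parabola with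
respect to the maximum norm equals `√(|x₁| + x₂ + 1/4) − |x₁| − 1/2`. -/
theorem dInfty_parabola_above (x : ℝ × ℝ) (hx : x.1 ^ 2 < x.2) :
    dInfty x {p : ℝ × ℝ | p.2 = p.1 ^ 2}
      = Real.sqrt (|x.1| + x.2 + 1 / 4) - |x.1| - 1 / 2 := by
  obtain ⟨a, b⟩ := x
  simp only at hx ⊢
  set r := Real.sqrt (|a| + b + 1 / 4) - |a| - 1 / 2 with hr
  have hnn : (0:ℝ) ≤ |a| + b + 1 / 4 := by nlinarith [abs_nonneg a, sq_abs a]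
  have hs : Real.sqrt (|a| + b + 1 / 4) = |a| + r + 1 / 2 := by rw [hr]; ring
  have hsq : (|a| + r + 1 / 2) ^ 2 = |a| + b + 1 / 4 := by
    rw [← hs]; exact Real.sq_sqrt hnn
  have hkey : (|a| + r) ^ 2 = b - r := by linear_combination hsq
  have hrpos : 0 < r := by
    have h1 : |a| + 1 / 2 < Real.sqrt (|a| + b + 1 / 4) := by
      rw [show |a| + 1/2 = Real.sqrt ((|a| + 1/2) ^ 2) from
        (Real.sqrt_sq (by positivity)).symm]
      apply Real.sqrt_lt_sqrt (by positivity)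
      nlinarith [sq_abs a]
    rw [hr]; linarith
  -- the witness point on the parabola
  set t : ℝ := if 0 ≤ a then |a| + r else -(|a| + r) with ht
  have ht2 : t ^ 2 = b - r := by
    rw [ht]; split_ifs <;> [skip; rw [neg_pow]] <;> simpa using hkey
  have hta : |a - t| = r := by
    rw [ht]; split_ifs with h
    · rw [abs_of_nonneg h, show a - (a + r) = -r by ring, abs_neg, abs_of_pos hrpos]
    · rw [abs_of_neg (not_le.mp h), show a - -(-a + r) = r by ring, abs_of_pos hrpos]
  have htb : |b - t ^ 2| = r := by rw [ht2, show b - (b - r) = r by ring, abs_of_pos hrpos]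
  have hmem : max |a - t| |b - t ^ 2| ∈
      (fun y : ℝ × ℝ => max |a - y.1| |b - y.2|) '' {p : ℝ × ℝ | p.2 = p.1 ^ 2} :=
    ⟨(t, t ^ 2), rfl, rfl⟩
  apply le_antisymm
  · apply csInf_le
    · exact ⟨0, fun y hy => by
        obtain ⟨p, _, rfl⟩ := hy
        exact le_trans (abs_nonneg _) (le_max_left _ _)⟩
    · rw [hta, htb] at hmem
      simpa using hmem
  · apply le_csInf ⟨_, hmem⟩
    rintro y ⟨p, hp, rfl⟩
    simp only [Set.mem_setOf_eq] at hp
    by_contra hlt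
    push_neg at hlt
    have h1 : |a - p.1| < r := lt_of_le_of_lt (le_max_left _ _) hlt
    have h2 : |b - p.2| < r := lt_of_le_of_lt (le_max_right _ _) hlt
    rw [hp] at h2
    obtain ⟨h1a, h1b⟩ := abs_lt.mp h1
    obtain ⟨h2a, h2b⟩ := abs_lt.mp h2
    -- p.1 ^ 2 > b - r = (|a| + r)^2, yet |p.1| ≤ |a| + r from h1
    have hc : |p.1| ≤ |a| + r := by
      have := abs_sub_abs_le_abs_sub p.1 a
      rw [abs_sub_comm] at this
      linarith [le_of_lt h1]
    have hc2 : p.1 ^ 2 ≤ (|a| + r) ^ 2 := by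
      have h0 : (0:ℝ) ≤ |p.1| := abs_nonneg _
      nlinarith [sq_abs p.1]
    linarith [hkey ▸ hc2]
end

section
/- In ℝ², the distance from a point x in the closed unit disk to the unit circle with respect to the maximum norm is d_∞(x, ∂B₁) = ½(−|x₁| − |x₂| + √(2 − (|x₁| − |x₂|)²)). -/
/-- In `ℝ²`, the distance from a point `x` in the closed unit disk to the unit circle with
respect to the maximum norm is `½(−|x₁| − |x₂| + √(2 − (|x₁| − |x₂|)²))`. -/
theorem dInfty_unitCircle_inside (x : ℝ × ℝ) (hx : x.1 ^ 2 + x.2 ^ 2 ≤ 1) :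
    dInfty x {y : ℝ × ℝ | y.1 ^ 2 + y.2 ^ 2 = 1}
      = (-|x.1| - |x.2| + Real.sqrt (2 - (|x.1| - |x.2|) ^ 2)) / 2 := by
  set a := |x.1| with ha_def
  set b := |x.2| with hb_def
  have ha : 0 ≤ a := abs_nonneg _
  have hb : 0 ≤ b := abs_nonneg _
  have hab : a ^ 2 + b ^ 2 ≤ 1 := by rw [ha_def, hb_def, sq_abs, sq_abs]; exact hx
  have hnn : (0:ℝ) ≤ 2 - (a - b) ^ 2 := by nlinarith [mul_nonneg ha hb]
  set s := Real.sqrt (2 - (a - b) ^ 2) with hs_def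
  have hs0 : 0 ≤ s := Real.sqrt_nonneg _
  have hs2 : s ^ 2 = 2 - (a - b) ^ 2 := Real.sq_sqrt hnn
  have hsab : a + b ≤ s := by nlinarith [mul_nonneg ha hb]
  have hsba : b - a ≤ s := by nlinarith [mul_nonneg ha hb]
  have hsab' : a - b ≤ s := by nlinarith [mul_nonneg ha hb]
  set d := (-a - b + s) / 2 with hd_def
  have hd0 : 0 ≤ d := by rw [hd_def]; linarith
  have had : 0 ≤ a + d := by rw [hd_def]; linarith
  have hbd : 0 ≤ b + d := by rw [hd_def]; linarith
  have hcirc : (a + d) ^ 2 + (b + d) ^ 2 = 1 := by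
    rw [hd_def]; nlinarith [hs2]
  unfold dInfty
  apply le_antisymm
  · -- sInf ≤ d : exhibit a point
    apply csInf_le
    · refine ⟨0, ?_⟩
      rintro t ⟨y, -, rfl⟩
      exact le_trans (abs_nonneg _) (le_max_left _ _)
    · refine ⟨(if 0 ≤ x.1 then a + d else -(a + d), if 0 ≤ x.2 then b + d else -(b + d)), ?_, ?_⟩
      · show _ = (1:ℝ)
        split_ifs <;> dsimp only <;> linear_combination hcirc
      · show max _ _ = d
        have h1 : |x.1 - (if 0 ≤ x.1 then a + d else -(a + d))| = d := by
          split_ifs with h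
          · rw [ha_def, abs_of_nonneg h]
            simp [abs_of_nonneg hd0]
          · rw [ha_def, abs_of_neg (not_le.mp h)]
            simp only [neg_neg, sub_neg_eq_add]
            rw [show x.1 + (-x.1 + d) = d by ring]
            exact abs_of_nonneg hd0
        have h2 : |x.2 - (if 0 ≤ x.2 then b + d else -(b + d))| = d := by
          split_ifs with h
          · rw [hb_def, abs_of_nonneg h]
            simp [abs_of_nonneg hd0]
          · rw [hb_def, abs_of_neg (not_le.mp h)]
            rw [show x.2 - -(-x.2 + d) = d by ring]
            exact abs_of_nonneg hd0
        rw [h1, h2, max_self]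
  · -- d ≤ sInf : lower bound
    apply le_csInf
    · exact ⟨max |x.1 - 1| |x.2 - 0|, ⟨(1, 0), by norm_num, rfl⟩⟩
    · rintro t ⟨y, hy, rfl⟩
      simp only [Set.mem_setOf_eq] at hy
      by_contra h
      push_neg at h
      set t := max |x.1 - y.1| |x.2 - y.2| with ht_def
      have ht0 : 0 ≤ t := le_trans (abs_nonneg _) (le_max_left _ _)
      have h1 : |x.1 - y.1| ≤ t := le_max_left _ _
      have h2 : |x.2 - y.2| ≤ t := le_max_right _ _
      have hy1 : |y.1| ≤ a + t := by
        calc |y.1| = |x.1 - (x.1 - y.1)| := by ring_nf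
          _ ≤ |x.1| + |x.1 - y.1| := abs_sub _ _
          _ ≤ a + t := by rw [ha_def]; linarith
      have hy2 : |y.2| ≤ b + t := by
        calc |y.2| = |x.2 - (x.2 - y.2)| := by ring_nf
          _ ≤ |x.2| + |x.2 - y.2| := abs_sub _ _
          _ ≤ b + t := by rw [hb_def]; linarith
      have hy1' : y.1 ^ 2 ≤ (a + t) ^ 2 := by
        rw [← sq_abs]; exact pow_le_pow_left₀ (abs_nonneg _) hy1 2
      have hy2' : y.2 ^ 2 ≤ (b + t) ^ 2 := by
        rw [← sq_abs]; exact pow_le_pow_left₀ (abs_nonneg _) hy2 2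
      nlinarith [hcirc, hy]
end

section
/- In ℝ², for a point x outside the unit disk with |x₂| ≤ |x₁| − 1, the distance to the unit circle with respect to the maximum norm is d_∞(x, ∂B₁) = |x₁| − 1. -/
/-- In `ℝ²`, for a point `x` outside the unit disk with `|x₂| ≤ |x₁| − 1`, the distance to the
unit circle with respect to the maximum norm is `|x₁| − 1`. -/
theorem dInfty_unitCircle_outside (x : ℝ × ℝ) (hx : 1 < x.1 ^ 2 + x.2 ^ 2)
    (hx2 : |x.2| ≤ |x.1| - 1) :
    dInfty x {y : ℝ × ℝ | y.1 ^ 2 + y.2 ^ 2 = 1} = |x.1| - 1 := by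
  have hx1 : 1 ≤ |x.1| := by
    have := abs_nonneg x.2
    linarith
  have hlb : ∀ z ∈ (fun y : ℝ × ℝ => max |x.1 - y.1| |x.2 - y.2|) ''
      {y : ℝ × ℝ | y.1 ^ 2 + y.2 ^ 2 = 1}, |x.1| - 1 ≤ z := by
    rintro z ⟨y, hy, rfl⟩
    simp only [Set.mem_setOf_eq] at hy
    have hy1 : |y.1| ≤ 1 := by
      nlinarith [sq_nonneg y.2, abs_nonneg y.1, sq_abs y.1]
    have h1 : |x.1| - 1 ≤ |x.1 - y.1| := by
      have := abs_sub_abs_le_abs_sub x.1 y.1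
      linarith
    exact le_trans h1 (le_max_left _ _)
  apply le_antisymm
  · set s : ℝ := if 0 ≤ x.1 then 1 else -1 with hs
    have hmem : ((s, 0) : ℝ × ℝ) ∈ {y : ℝ × ℝ | y.1 ^ 2 + y.2 ^ 2 = 1} := by
      simp only [Set.mem_setOf_eq, hs]
      split <;> norm_num
    have hval : max |x.1 - s| |x.2 - 0| = |x.1| - 1 := by
      have hxs : |x.1 - s| = |x.1| - 1 := by
        simp only [hs]
        rcases le_or_gt 0 x.1 with h | h
        · rw [if_pos h, abs_of_nonneg h] at *
          rw [abs_of_nonneg (by linarith : (0:ℝ) ≤ x.1 - 1)]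
        · rw [if_neg (not_le.mpr h), abs_of_neg h] at *
          rw [show x.1 - (-1) = x.1 + 1 from by ring,
            abs_of_nonpos (by linarith : x.1 + 1 ≤ 0)]
          ring
      rw [hxs, sub_zero, max_eq_left hx2]
    calc dInfty x {y : ℝ × ℝ | y.1 ^ 2 + y.2 ^ 2 = 1}
        ≤ max |x.1 - s| |x.2 - 0| :=
          csInf_le ⟨|x.1| - 1, hlb⟩ ⟨(s, 0), hmem, rfl⟩
      _ = |x.1| - 1 := hval
  · apply le_csInf
    · exact ⟨_, ⟨(1, 0), by norm_num, rfl⟩⟩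
    · exact hlb
end
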